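/- There exist a constant C > 0 depending only on c₂, c₃ and a threshold D₀ ∈ ℕ such that the following holds. Let m ≥ D ≥ D₀ with m (log m)² ≤ D², let w_1, …, w_m ∈ ℝ^D be unit vectors satisfying (A2) with constant c₂ and (A3) with constant c₃, and let ŵ_1, …, ŵ_m ∈ ℝ^D be unit vectors with δ_max := max_{k∈[m]} min_{s∈{−1,1}} ‖s ŵ_k − w_k‖₂ ≤ D^{1/2}/(C m √(log m)); for each k let s_k ∈ {−1,1} attain this minimum. Then for n ∈ {2,3}, the matrices G̃_n with entries (G̃_n)_{ℓk} = ⟨ŵ_ℓ, s_k w_k⟩^n and Ĝ_n with entries (Ĝ_n)_{ℓk} = ⟨ŵ_ℓ, ŵ_k⟩^n satisfy ‖G̃_n − Ĝ_n‖ ≤ C m (log(m)/D)^{(2n−1)/4} δ_max in operator norm. -/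

import Mathlib

open scoped BigOperators

noncomputable def opNorm {n : Type*} [Fintype n] [DecidableEq n] (A : Matrix n n ℝ) : ℝ :=
  ‖Matrix.toEuclideanCLM (𝕜 := ℝ) A‖

noncomputable def l2norm {d : ℕ} (v : Fin d → ℝ) : ℝ := Real.sqrt (∑ i, (v i) ^ 2)

def dot {d : ℕ} (v w : Fin d → ℝ) : ℝ := ∑ i, v i * w i

noncomputable def gram {D m : ℕ} (w : Fin m → Fin D → ℝ) (n : ℕ) :
    Matrix (Fin m) (Fin m) ℝ := Matrix.of fun k l => (dot (w k) (w l)) ^ n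

/-!
Replace each `ŵ_k` by the sign-aligned vector `v_k = s_k ŵ_k`: this conjugates `G̃_n − Ĝ_n` by the
diagonal matrix `diag(s_k^n)` of signs, which does not increase the operator norm. Put
`ε = √(log m / D)`. By incoherence and `δ_max ≤ ε`, every off-diagonal `⟨v_l, w_k⟩` and
`⟨v_l, v_k⟩` is `O(ε)`, so the rows of the Gram matrix of the `v_k` have absolute sums `O(m ε)`
and, by Schur's test, `∑_l ⟨v_l, x⟩² = O(m ε) ‖x‖²`.
The diagonal entries are `⟨v_k, w_k⟩^n − 1 = O(δ_max²)` since `⟨v_k, w_k⟩ = 1 − ‖v_k − w_k‖²/2`.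
An off-diagonal entry is at most `n (O(ε))^{n−1} |⟨v_l, w_k − v_k⟩|`, so the Frobenius norm of the
off-diagonal part is `O(ε^{n−1} m √ε δ_max) = O(m (log m / D)^{(2n−1)/4} δ_max)`.
-/

open Finset Matrix
open scoped InnerProductSpace

section OpNorm

variable {ι : Type*} [Fintype ι] [DecidableEq ι]

lemma opNorm_add_le (A B : Matrix ι ι ℝ) : opNorm (A + B) ≤ opNorm A + opNorm B := by
  unfold opNorm
  rw [map_add]
  exact norm_add_le _ _

lemma opNorm_mul_le (A B : Matrix ι ι ℝ) : opNorm (A * B) ≤ opNorm A * opNorm B := by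
  unfold opNorm
  rw [map_mul]
  exact norm_mul_le _ _

lemma opNorm_le_of_sum_mulVec_sq_le (A : Matrix ι ι ℝ) {c : ℝ} (hc : 0 ≤ c)
    (h : ∀ x : ι → ℝ, ∑ i, (A *ᵥ x) i ^ 2 ≤ c ^ 2 * ∑ i, x i ^ 2) : opNorm A ≤ c := by
  refine ContinuousLinearMap.opNorm_le_bound _ hc fun x => ?_
  rw [← sq_le_sq₀ (norm_nonneg _) (by positivity), mul_pow, EuclideanSpace.norm_sq_eq,
    EuclideanSpace.norm_sq_eq]
  simpa only [ofLp_toEuclideanCLM, Real.norm_eq_abs, sq_abs] using h x.ofLp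

lemma opNorm_le_of_sum_sq_le (A : Matrix ι ι ℝ) {r : ℝ} (hr : 0 ≤ r)
    (h : ∑ i, ∑ j, A i j ^ 2 ≤ r ^ 2) : opNorm A ≤ r := by
  refine opNorm_le_of_sum_mulVec_sq_le A hr fun x => ?_
  calc ∑ i, (A *ᵥ x) i ^ 2 ≤ ∑ i, (∑ j, A i j ^ 2) * ∑ j, x j ^ 2 :=
        sum_le_sum fun i _ => sum_mul_sq_le_sq_mul_sq _ _ _
    _ ≤ r ^ 2 * ∑ j, x j ^ 2 := by
        rw [← sum_mul]
        exact mul_le_mul_of_nonneg_right h (by positivity)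

lemma opNorm_diagonal_le (d : ι → ℝ) {c : ℝ} (hc : 0 ≤ c) (h : ∀ i, |d i| ≤ c) :
    opNorm (diagonal d) ≤ c := by
  refine opNorm_le_of_sum_mulVec_sq_le _ hc fun x => ?_
  rw [mul_sum]
  refine sum_le_sum fun i _ => ?_
  rw [mulVec_diagonal, mul_pow]
  exact mul_le_mul_of_nonneg_right (sq_le_sq.mpr ((h i).trans (le_abs_self c))) (sq_nonneg _)

lemma opNorm_le_of_abs_diag_le_of_abs_offDiag_le (A B : Matrix ι ι ℝ) {c r : ℝ} (hc : 0 ≤ c)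
    (hr : 0 ≤ r) (hdiag : ∀ i, |A i i| ≤ c) (hoff : ∀ i j, i ≠ j → |A i j| ≤ B i j)
    (hB : ∑ i, ∑ j, B i j ^ 2 ≤ r ^ 2) : opNorm A ≤ c + r := by
  have hsplit : A = diagonal (fun i => A i i) + (A - diagonal fun i => A i i) := by abel
  rw [hsplit]
  refine (opNorm_add_le _ _).trans (add_le_add (opNorm_diagonal_le _ hc hdiag) ?_)
  refine opNorm_le_of_sum_sq_le _ hr (le_trans (sum_le_sum fun i _ => sum_le_sum fun j _ => ?_) hB)
  by_cases hij : i = j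
  · subst hij
    simpa using sq_nonneg (B i i)
  · simpa [diagonal_apply_ne _ hij] using sq_le_sq.mpr ((hoff i j hij).trans (le_abs_self _))

lemma opNorm_diagonal_mul_mul_diagonal_le (σ : ι → ℝ) (hσ : ∀ i, |σ i| ≤ 1) (A : Matrix ι ι ℝ) :
    opNorm (diagonal σ * A * diagonal σ) ≤ opNorm A := by
  have hD := opNorm_diagonal_le σ zero_le_one hσ
  have hD0 : 0 ≤ opNorm (diagonal σ) := norm_nonneg _
  have hA : 0 ≤ opNorm A := norm_nonneg _
  calc opNorm (diagonal σ * A * diagonal σ)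
      ≤ opNorm (diagonal σ) * opNorm A * opNorm (diagonal σ) :=
        (opNorm_mul_le _ _).trans (mul_le_mul_of_nonneg_right (opNorm_mul_le _ _) (norm_nonneg _))
    _ ≤ 1 * opNorm A * 1 := by gcongr
    _ = opNorm A := by ring

end OpNorm

lemma sum_mul_mul_le_of_sum_abs_le {ι : Type*} [Fintype ι] (g : ι → ι → ℝ)
    (hg : ∀ i j, g i j = g j i) {R : ℝ} (hR : ∀ i, ∑ j, |g i j| ≤ R) (y : ι → ℝ) :
    ∑ i, ∑ j, y i * y j * g i j ≤ R * ∑ i, y i ^ 2 := by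
  have hterm : ∀ i j, y i * y j * g i j ≤ |g i j| * (y i ^ 2 / 2) + |g j i| * (y j ^ 2 / 2) := by
    intro i j
    rw [← hg i j]
    have hamgm := two_mul_le_add_sq |y i| |y j|
    rw [sq_abs, sq_abs] at hamgm
    calc y i * y j * g i j ≤ |y i * y j * g i j| := le_abs_self _
      _ = |g i j| * (|y i| * |y j|) := by rw [abs_mul, abs_mul]; ring
      _ ≤ |g i j| * ((y i ^ 2 + y j ^ 2) / 2) := by gcongr; linarith
      _ = _ := by ring
  have hrow : ∀ i, ∑ j, |g i j| * (y i ^ 2 / 2) ≤ R * (y i ^ 2 / 2) := fun i => by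
    rw [← sum_mul]
    exact mul_le_mul_of_nonneg_right (hR i) (by positivity)
  calc ∑ i, ∑ j, y i * y j * g i j
      ≤ ∑ i, ∑ j, (|g i j| * (y i ^ 2 / 2) + |g j i| * (y j ^ 2 / 2)) :=
        sum_le_sum fun i _ => sum_le_sum fun j _ => hterm i j
    _ = ∑ i, ∑ j, |g i j| * (y i ^ 2 / 2) + ∑ j, ∑ i, |g j i| * (y j ^ 2 / 2) := by
        simp only [sum_add_distrib]
        exact congrArg _ sum_comm
    _ ≤ ∑ i, R * (y i ^ 2 / 2) + ∑ j, R * (y j ^ 2 / 2) :=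
        add_le_add (sum_le_sum fun i _ => hrow i) (sum_le_sum fun j _ => hrow j)
    _ = R * ∑ i, y i ^ 2 := by
        rw [← sum_add_distrib, mul_sum]
        exact sum_congr rfl fun i _ => by ring

lemma sum_le_add_card_mul_of_le_of_ne {ι : Type*} [Fintype ι] [DecidableEq ι] (f : ι → ℝ) (i : ι)
    {a b : ℝ} (hb : 0 ≤ b) (hi : f i ≤ a) (hne : ∀ j, j ≠ i → f j ≤ b) :
    ∑ j, f j ≤ a + Fintype.card ι * b := by
  rw [← add_sum_erase _ _ (mem_univ i)]
  refine add_le_add hi ((sum_le_card_nsmul _ _ b fun j hj => hne j (ne_of_mem_erase hj)).trans ?_)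
  rw [nsmul_eq_mul]
  exact mul_le_mul_of_nonneg_right (by exact_mod_cast card_le_univ _) hb

section InnerProductSpace

variable {E : Type*} [NormedAddCommGroup E] [InnerProductSpace ℝ E]

lemma abs_inner_le_abs_inner_add {x x' y y' : E} (hx' : ‖x'‖ ≤ 1) (hy : ‖y‖ ≤ 1) :
    |⟪x, y⟫_ℝ| ≤ |⟪x', y'⟫_ℝ| + ‖x - x'‖ + ‖y - y'‖ := by
  have hsplit : ⟪x, y⟫_ℝ = ⟪x', y'⟫_ℝ + ⟪x - x', y⟫_ℝ + ⟪x', y - y'⟫_ℝ := by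
    rw [inner_sub_left, inner_sub_right]; ring
  rw [hsplit]
  refine (abs_add_le _ _).trans (add_le_add ((abs_add_le _ _).trans (add_le_add le_rfl ?_)) ?_)
  · exact (abs_real_inner_le_norm _ _).trans (mul_le_of_le_one_right (norm_nonneg _) hy)
  · exact (abs_real_inner_le_norm _ _).trans (mul_le_of_le_one_left (norm_nonneg _) hx')

lemma inner_eq_one_sub_norm_sub_sq_div_two {x y : E} (hx : ‖x‖ = 1) (hy : ‖y‖ = 1) :
    ⟪x, y⟫_ℝ = 1 - ‖x - y‖ ^ 2 / 2 := by
  rw [norm_sub_sq_real, hx, hy]; ring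

lemma abs_inner_pow_sub_one_le {x y : E} (hx : ‖x‖ = 1) (hy : ‖y‖ = 1) (n : ℕ) :
    |⟪x, y⟫_ℝ ^ n - 1| ≤ n * ‖x - y‖ ^ 2 / 2 := by
  have hxy : |⟪x, y⟫_ℝ| ≤ 1 := by simpa [hx, hy] using abs_real_inner_le_norm x y
  have hdist : |⟪x, y⟫_ℝ - 1| = ‖x - y‖ ^ 2 / 2 := by
    rw [inner_eq_one_sub_norm_sub_sq_div_two hx hy, sub_sub_cancel_left, abs_neg,
      abs_of_nonneg (by positivity)]
  have h := abs_pow_sub_pow_le ⟪x, y⟫_ℝ 1 n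
  rw [one_pow, abs_one, max_eq_right hxy, one_pow, mul_one, hdist] at h
  linarith

lemma sum_inner_sq_le_of_sum_abs_inner_le {ι : Type*} [Fintype ι] (u : ι → E) {R : ℝ}
    (hR0 : 0 ≤ R) (hR : ∀ i, ∑ j, |⟪u i, u j⟫_ℝ| ≤ R) (x : E) :
    ∑ i, ⟪u i, x⟫_ℝ ^ 2 ≤ R * ‖x‖ ^ 2 := by
  set y : ι → ℝ := fun i => ⟪u i, x⟫_ℝ
  set z : E := ∑ i, y i • u i
  set T := ∑ i, y i ^ 2
  have hT : T = ⟪z, x⟫_ℝ := by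
    simp only [T, z, sum_inner, real_inner_smul_left, y, sq]
  have hz : ‖z‖ ^ 2 ≤ R * T := by
    rw [← real_inner_self_eq_norm_sq]
    calc ⟪z, z⟫_ℝ = ∑ i, ∑ j, y i * y j * ⟪u i, u j⟫_ℝ := by
          simp only [z, sum_inner, inner_sum, real_inner_smul_left, real_inner_smul_right]
          exact sum_congr rfl fun i _ => sum_congr rfl fun j _ => by rw [real_inner_comm]; ring
      _ ≤ R * T := sum_mul_mul_le_of_sum_abs_le _ (fun i j => real_inner_comm _ _) hR y
  have hCS : T ^ 2 ≤ R * T * ‖x‖ ^ 2 := by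
    calc T ^ 2 ≤ (‖z‖ * ‖x‖) ^ 2 := by
          rw [hT]; exact sq_le_sq.mpr ((abs_real_inner_le_norm z x).trans (le_abs_self _))
      _ = ‖z‖ ^ 2 * ‖x‖ ^ 2 := mul_pow _ _ _
      _ ≤ R * T * ‖x‖ ^ 2 := mul_le_mul_of_nonneg_right hz (by positivity)
  have hT0 : 0 ≤ T := by positivity
  nlinarith [mul_nonneg hR0 (sq_nonneg ‖x‖)]

lemma abs_inner_le_of_ne {m : ℕ} {w v : Fin m → E} {a ε δ : ℝ} (hw : ∀ k, ‖w k‖ = 1)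
    (hvw : ∀ k, ‖v k - w k‖ ≤ δ) (hδε : δ ≤ ε) (hinc : ∀ l k, l ≠ k → |⟪w l, w k⟫_ℝ| ≤ a * ε)
    {l k : Fin m} (hlk : l ≠ k) {y : E} (hy : ‖y‖ ≤ 1) (hyw : ‖y - w k‖ ≤ δ) :
    |⟪v l, y⟫_ℝ| ≤ (a + 2) * ε := by
  have h := abs_inner_le_abs_inner_add (x := v l) (y' := w k) (hw l).le hy
  linarith [hinc l k hlk, hvw l]

lemma sum_inner_sq_le_of_approx {m : ℕ} {w v : Fin m → E} {a ε δ : ℝ} (ha : 0 ≤ a)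
    (hw : ∀ k, ‖w k‖ = 1) (hv : ∀ k, ‖v k‖ = 1) (hvw : ∀ k, ‖v k - w k‖ ≤ δ) (hδε : δ ≤ ε)
    (hmε : 1 ≤ m * ε) (hinc : ∀ l k, l ≠ k → |⟪w l, w k⟫_ℝ| ≤ a * ε) (x : E) :
    ∑ l, ⟪v l, x⟫_ℝ ^ 2 ≤ (a + 3) * m * ε * ‖x‖ ^ 2 := by
  have hε : 0 < ε := pos_of_mul_pos_right (one_pos.trans_le hmε) (Nat.cast_nonneg m)
  refine sum_inner_sq_le_of_sum_abs_inner_le v (by positivity) (fun l => ?_) x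
  have hrow := sum_le_add_card_mul_of_le_of_ne (fun k => |⟪v l, v k⟫_ℝ|) l (b := (a + 2) * ε)
    (by positivity) (by rw [real_inner_self_eq_norm_sq, hv l, one_pow, abs_one])
    fun k hkl => abs_inner_le_of_ne hw hvw hδε hinc hkl.symm (hv k).le (hvw k)
  rw [Fintype.card_fin] at hrow
  linarith

theorem opNorm_inner_pow_sub_inner_pow_le {m : ℕ} (w v : Fin m → E) {a ε δ : ℝ} (ha : 0 ≤ a)
    (hw : ∀ k, ‖w k‖ = 1) (hv : ∀ k, ‖v k‖ = 1) (hδ : 0 ≤ δ) (hvw : ∀ k, ‖v k - w k‖ ≤ δ)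
    (hδε : δ ≤ ε) (hmε : 1 ≤ m * ε) (hinc : ∀ l k, l ≠ k → |⟪w l, w k⟫_ℝ| ≤ a * ε) (n : ℕ) :
    opNorm ((of fun l k => ⟪v l, w k⟫_ℝ ^ n) - of fun l k => ⟪v l, v k⟫_ℝ ^ n) ≤
      n * δ ^ 2 / 2 + n * ((a + 2) * ε) ^ (n - 1) * m * √((a + 3) * ε) * δ := by
  have hε : 0 ≤ ε := hδ.trans hδε
  set c : ℝ := n * ((a + 2) * ε) ^ (n - 1)
  refine opNorm_le_of_abs_diag_le_of_abs_offDiag_le _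
    (of fun l k => c * |⟪v l, w k - v k⟫_ℝ|) (by positivity) (by positivity) ?diag ?offDiag ?frob
  case diag =>
    intro k
    simp only [Matrix.sub_apply, of_apply, real_inner_self_eq_norm_sq, hv k, one_pow]
    have hsq := pow_le_pow_left₀ (norm_nonneg (v k - w k)) (hvw k) 2
    exact (abs_inner_pow_sub_one_le (hv k) (hw k) n).trans (by gcongr)
  case offDiag =>
    intro l k hlk
    calc |((of fun l k => ⟪v l, w k⟫_ℝ ^ n) - of fun l k => ⟪v l, v k⟫_ℝ ^ n) l k|
        ≤ |⟪v l, w k⟫_ℝ - ⟪v l, v k⟫_ℝ| * n * max |⟪v l, w k⟫_ℝ| |⟪v l, v k⟫_ℝ| ^ (n - 1) :=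
          abs_pow_sub_pow_le _ _ n
      _ ≤ |⟪v l, w k - v k⟫_ℝ| * n * ((a + 2) * ε) ^ (n - 1) := by
          rw [inner_sub_right]
          gcongr
          exact max_le (abs_inner_le_of_ne hw hvw hδε hinc hlk (hw k).le (by simpa using hδ))
            (abs_inner_le_of_ne hw hvw hδε hinc hlk (hv k).le (hvw k))
      _ = _ := by simp only [of_apply, c]; ring
  case frob =>
    calc ∑ l, ∑ k, (of fun l k => c * |⟪v l, w k - v k⟫_ℝ|) l k ^ 2
        = c ^ 2 * ∑ k, ∑ l, ⟪v l, w k - v k⟫_ℝ ^ 2 := by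
          simp only [of_apply, mul_pow, sq_abs, ← mul_sum]
          rw [sum_comm]
      _ ≤ c ^ 2 * ∑ _k : Fin m, (a + 3) * m * ε * δ ^ 2 := by
          gcongr with k
          refine (sum_inner_sq_le_of_approx ha hw hv hvw hδε hmε hinc _).trans ?_
          gcongr
          rw [norm_sub_rev]
          exact hvw k
      _ = (c * m * √((a + 3) * ε) * δ) ^ 2 := by
          have hsqrt : √((a + 3) * ε) ^ 2 = (a + 3) * ε := Real.sq_sqrt (by positivity)
          rw [sum_const, card_univ, Fintype.card_fin, nsmul_eq_mul, mul_pow _ δ, mul_pow _ √_, hsqrt]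
          ring

end InnerProductSpace

lemma perturbation_bound_le {m : ℕ} {a ε δ : ℝ} (ha : 0 ≤ a) (hε : 0 ≤ ε) (hε1 : ε ≤ 1)
    (hmε : 1 ≤ m * ε ^ 2) (hδ : 0 ≤ δ) (hδε : δ ≤ ε) {n : ℕ} (hn : n ≤ 3) :
    n * δ ^ 2 / 2 + n * ((a + 2) * ε) ^ (n - 1) * m * √((a + 3) * ε) * δ ≤
      (3 / 2 + 3 * (a + 2) ^ 2 * (a + 3)) * m * (ε ^ (n - 1) * √ε) * δ := by
  set P := ε ^ (n - 1) * √ε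
  have hn' : (n : ℝ) ≤ 3 := by exact_mod_cast hn
  have hP : ε ≤ m * P := by
    have h1 : ε ^ 2 ≤ ε ^ (n - 1) := pow_le_pow_of_le_one hε hε1 (by omega)
    have h2 : ε ≤ √ε := Real.le_sqrt_self_iff.mpr hε1
    calc ε ≤ m * ε ^ 2 * ε := le_mul_of_one_le_left hε hmε
      _ ≤ m * (ε ^ (n - 1) * √ε) := by
          rw [mul_assoc]; gcongr
  have hdiag : n * δ ^ 2 / 2 ≤ 3 / 2 * m * P * δ := by
    have h1 := mul_le_mul_of_nonneg_right hn' (sq_nonneg δ)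
    have h2 : δ ^ 2 ≤ ε * δ := by rw [sq]; exact mul_le_mul_of_nonneg_right hδε hδ
    have h3 := mul_le_mul_of_nonneg_right hP hδ
    linarith
  have hcoef : n * (a + 2) ^ (n - 1) * √(a + 3) ≤ 3 * (a + 2) ^ 2 * (a + 3) := by
    have h1 : (a + 2) ^ (n - 1) ≤ (a + 2) ^ 2 := pow_le_pow_right₀ (by linarith) (by omega)
    have h2 : √(a + 3) ≤ a + 3 := Real.sqrt_le_self_iff.mpr (Or.inr (by linarith))
    gcongr
  have hoff : n * ((a + 2) * ε) ^ (n - 1) * m * √((a + 3) * ε) * δ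
      = n * (a + 2) ^ (n - 1) * √(a + 3) * m * P * δ := by
    rw [mul_pow, Real.sqrt_mul (by linarith)]; ring
  rw [hoff]
  have hmPδ : 0 ≤ m * P * δ := by positivity
  linarith [mul_le_mul_of_nonneg_right hcoef hmPδ]

lemma rpow_eq_sqrt_pow_mul_sqrt_sqrt {L : ℝ} (hL : 0 ≤ L) {n : ℕ} (hn : 1 ≤ n) :
    L ^ ((2 * (n : ℝ) - 1) / 4) = √L ^ (n - 1) * √√L := by
  obtain ⟨k, rfl⟩ : ∃ k, n = k + 1 := ⟨n - 1, by omega⟩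
  rw [Nat.add_sub_cancel, Real.sqrt_eq_rpow, Real.sqrt_eq_rpow, ← Real.rpow_natCast,
    ← Real.rpow_mul hL, ← Real.rpow_mul hL, ← Real.rpow_add' hL (by positivity)]
  congr 1
  push_cast
  ring

lemma dot_eq_inner {d : ℕ} (v w : Fin d → ℝ) :
    dot v w = ⟪WithLp.toLp 2 v, WithLp.toLp 2 w⟫_ℝ := by
  simp [dot, PiLp.inner_apply, mul_comm]

lemma l2norm_eq_norm {d : ℕ} (v : Fin d → ℝ) : l2norm v = ‖WithLp.toLp 2 v‖ := by
  simp [l2norm, EuclideanSpace.norm_eq]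

lemma norm_toLp_eq_one {d : ℕ} {v : Fin d → ℝ} (hv : ∑ i, v i ^ 2 = 1) :
    ‖WithLp.toLp 2 v‖ = 1 := by
  rw [← l2norm_eq_norm, l2norm, hv, Real.sqrt_one]

lemma mixed_gram_sub_gram_eq {d m : ℕ} (w wh : Fin m → Fin d → ℝ) (s : Fin m → ℝ)
    (hs : ∀ k, s k * s k = 1) (n : ℕ) :
    ((of fun l k => dot (wh l) (s k • w k) ^ n) - of fun l k => dot (wh l) (wh k) ^ n) =
      diagonal (fun k => s k ^ n) *
        ((of fun l k => dot (s l • wh l) (w k) ^ n) -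
          of fun l k => dot (s l • wh l) (s k • wh k) ^ n) *
        diagonal (fun k => s k ^ n) := by
  ext l k
  have hl : s l ^ n * s l ^ n = 1 := by rw [← mul_pow, hs l, one_pow]
  have hk : s k ^ n * s k ^ n = 1 := by rw [← mul_pow, hs k, one_pow]
  have hdot : ∀ v u : Fin d → ℝ, dot v u = v ⬝ᵥ u := fun _ _ => rfl
  simp only [hdot, Matrix.sub_apply, of_apply, diagonal_mul, mul_diagonal, smul_dotProduct,
    dotProduct_smul, smul_eq_mul]
  linear_combination ((wh l ⬝ᵥ wh k) ^ n * (s k ^ n * s k ^ n) - s k ^ n * (wh l ⬝ᵥ w k) ^ n) * hl +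
    (wh l ⬝ᵥ wh k) ^ n * hk

lemma one_le_log_of_three_le {m : ℕ} (hm : 3 ≤ m) : 1 ≤ Real.log m := by
  have h3 : (3 : ℝ) ≤ m := by exact_mod_cast hm
  rw [Real.le_log_iff_exp_le (by positivity)]
  linarith [Real.exp_one_lt_d9]

lemma log_div_le_one {D m : ℕ} (hm : 3 ≤ m) (hD : 0 < D) (hDm : D ≤ m)
    (h : (m : ℝ) * Real.log m ^ 2 ≤ (D : ℝ) ^ 2) : Real.log m / D ≤ 1 := by
  have hlog := one_le_log_of_three_le hm
  have hDm' : (D : ℝ) ≤ m := by exact_mod_cast hDm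
  have hD' : (0 : ℝ) < D := by exact_mod_cast hD
  have hsq : Real.log m ^ 2 ≤ D := by
    refine le_of_mul_le_mul_left ?_ hD'
    calc (D : ℝ) * Real.log m ^ 2 ≤ m * Real.log m ^ 2 := by gcongr
      _ ≤ (D : ℝ) * D := by rw [← sq]; exact h
  rw [div_le_one hD']
  nlinarith

lemma one_le_mul_log_div {D m : ℕ} (hm : 3 ≤ m) (hD : 0 < D) (hDm : D ≤ m) :
    1 ≤ m * (Real.log m / D) := by
  have hlog := one_le_log_of_three_le hm
  have hDm' : (D : ℝ) ≤ m := by exact_mod_cast hDm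
  have hD' : (0 : ℝ) < D := by exact_mod_cast hD
  rw [mul_div_assoc', le_div_iff₀ hD']
  nlinarith

lemma div_le_sqrt_log_div {D m : ℕ} {C : ℝ} (hC : 1 ≤ C) (hm : 3 ≤ m) (hD : 0 < D) (hDm : D ≤ m) :
    √D / (C * m * √(Real.log m)) ≤ √(Real.log m / D) := by
  have hlog := one_le_log_of_three_le hm
  have hDm' : (D : ℝ) ≤ m := by exact_mod_cast hDm
  have hm' : (3 : ℝ) ≤ m := by exact_mod_cast hm
  have hD' : (0 : ℝ) < D := by exact_mod_cast hD
  rw [Real.sqrt_div (by linarith), div_le_div_iff₀ (by positivity) (by positivity),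
    Real.mul_self_sqrt hD'.le, mul_comm (√(Real.log m)), mul_assoc,
    Real.mul_self_sqrt (by linarith)]
  calc (D : ℝ) ≤ 1 * m * 1 := by linarith
    _ ≤ C * m * Real.log m := by gcongr

lemma sqrt_log_div_bounds {D m : ℕ} (hm : 3 ≤ m) (hD : 0 < D) (hDm : D ≤ m)
    (h : (m : ℝ) * Real.log m ^ 2 ≤ (D : ℝ) ^ 2) :
    √(Real.log m / D) ≤ 1 ∧ 1 ≤ m * √(Real.log m / D) ^ 2 ∧ 1 ≤ m * √(Real.log m / D) := by
  have hε1 : √(Real.log m / D) ≤ 1 := Real.sqrt_le_one.mpr (log_div_le_one hm hD hDm h)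
  have hmε2 : 1 ≤ m * √(Real.log m / D) ^ 2 := by
    rw [Real.sq_sqrt (by positivity)]; exact one_le_mul_log_div hm hD hDm
  refine ⟨hε1, hmε2, hmε2.trans ?_⟩
  gcongr
  exact pow_le_of_le_one (Real.sqrt_nonneg _) hε1 two_ne_zero

theorem mixed_gram_perturbation_general
    (c₂ c₃ : ℝ) :
    ∃ C : ℝ, 0 < C ∧ ∃ D₀ : ℕ,
      ∀ (D m : ℕ), D₀ ≤ D → D ≤ m → (m : ℝ) * (Real.log m) ^ 2 ≤ (D : ℝ) ^ 2 →
      ∀ (w wh : Fin m → Fin D → ℝ) (s : Fin m → ℝ) (δmax : ℝ),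
        (∀ k, ∑ i, (w k i) ^ 2 = 1) →
        (∀ k, ∑ i, (wh k i) ^ 2 = 1) →
        (∀ k l, k ≠ l → (dot (w k) (w l)) ^ 2 ≤ c₂ * Real.log m / D) →
        (∀ n : ℕ, 2 ≤ n → IsUnit (gram w n) ∧ opNorm (gram w n)⁻¹ ≤ c₃) →
        (∀ k, s k = 1 ∨ s k = -1) →
        (∀ k, l2norm (s k • wh k - w k) = min (l2norm (wh k - w k)) (l2norm (wh k + w k))) →
        (∀ k, min (l2norm (wh k - w k)) (l2norm (wh k + w k)) ≤ δmax) →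
        δmax ≤ Real.sqrt D / (C * m * Real.sqrt (Real.log m)) →
        ∀ n : ℕ, n = 2 ∨ n = 3 →
          opNorm ((Matrix.of fun l k => (dot (wh l) (s k • w k)) ^ n) -
              Matrix.of fun l k => (dot (wh l) (wh k)) ^ n) ≤
            C * m * (Real.log m / D) ^ ((2 * (n : ℝ) - 1) / 4) * δmax := by
  set a := √c₂
  have ha : 0 ≤ a := Real.sqrt_nonneg c₂
  refine ⟨3 / 2 + 3 * (a + 2) ^ 2 * (a + 3), by positivity, 3, ?_⟩
  intro D m hD hDm hmD w wh s δmax hw hwh hinc _ hs hmin hδmin hδC n hn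
  obtain ⟨hn1, hn3⟩ : 1 ≤ n ∧ n ≤ 3 := by omega
  have hm : 3 ≤ m := hD.trans hDm
  set L := Real.log m / D
  have hL0 : 0 ≤ L := by positivity
  obtain ⟨hε1, hmε2, hmε⟩ := sqrt_log_div_bounds hm (by omega) hDm hmD
  set W : Fin m → EuclideanSpace ℝ (Fin D) := fun k => WithLp.toLp 2 (w k)
  set V : Fin m → EuclideanSpace ℝ (Fin D) := fun k => WithLp.toLp 2 (s k • wh k)
  have hs_abs : ∀ k, |s k| = 1 := fun k => by rcases hs k with h | h <;> simp [h]
  have hW : ∀ k, ‖W k‖ = 1 := fun k => norm_toLp_eq_one (hw k)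
  have hV : ∀ k, ‖V k‖ = 1 := fun k => by
    simp only [V, WithLp.toLp_smul, norm_smul, norm_toLp_eq_one (hwh k), Real.norm_eq_abs,
      hs_abs, one_mul]
  have hVW : ∀ k, ‖V k - W k‖ ≤ δmax := fun k => by
    rw [← WithLp.toLp_sub, ← l2norm_eq_norm, hmin k]; exact hδmin k
  have hδ0 : 0 ≤ δmax := (norm_nonneg _).trans (hVW ⟨0, by omega⟩)
  have hδε : δmax ≤ √L :=
    hδC.trans (div_le_sqrt_log_div (le_add_of_le_of_nonneg (by norm_num) (by positivity)) hm
      (by omega) hDm)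
  have hincW : ∀ l k, l ≠ k → |⟪W l, W k⟫_ℝ| ≤ a * √L := fun l k hlk => by
    rw [← dot_eq_inner, ← Real.sqrt_mul' _ hL0]
    exact Real.abs_le_sqrt (by simpa only [mul_div_assoc] using hinc l k hlk)
  have hsigns : ∀ k, |s k ^ n| ≤ 1 := fun k => by rw [abs_pow, hs_abs, one_pow]
  rw [mixed_gram_sub_gram_eq w wh s (fun k => by rw [← abs_mul_abs_self, hs_abs, one_mul]) n,
    rpow_eq_sqrt_pow_mul_sqrt_sqrt hL0 hn1]
  refine (opNorm_diagonal_mul_mul_diagonal_le _ hsigns _).trans ?_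
  simp only [dot_eq_inner]
  exact (opNorm_inner_pow_sub_inner_pow_le W V ha hW hV hδ0 hVW hδε hmε hincW n).trans
    (perturbation_bound_le ha (Real.sqrt_nonneg L) hε1 hmε2 hδ0 hδε hn3)

/-- For `n ∈ {2,3}`, the mixed Gram matrix `G̃_n` and the Gram matrix `Ĝ_n` of the approximated
weights satisfy `‖G̃_n − Ĝ_n‖ ≤ C m (log(m)/D)^{(2n−1)/4} δ_max`. -/
theorem mixed_gram_perturbation
    (c₂ c₃ : ℝ) (hc₂ : 0 < c₂) (hc₃ : 0 < c₃) :
    ∃ C : ℝ, 0 < C ∧ ∃ D₀ : ℕ,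
      ∀ (D m : ℕ), D₀ ≤ D → D ≤ m → (m : ℝ) * (Real.log m) ^ 2 ≤ (D : ℝ) ^ 2 →
      ∀ (w wh : Fin m → Fin D → ℝ) (s : Fin m → ℝ) (δmax : ℝ),
        (∀ k, ∑ i, (w k i) ^ 2 = 1) →
        (∀ k, ∑ i, (wh k i) ^ 2 = 1) →
        (∀ k l, k ≠ l → (dot (w k) (w l)) ^ 2 ≤ c₂ * Real.log m / D) →
        (∀ n : ℕ, 2 ≤ n → IsUnit (gram w n) ∧ opNorm (gram w n)⁻¹ ≤ c₃) →
        (∀ k, s k = 1 ∨ s k = -1) →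
        (∀ k, l2norm (s k • wh k - w k) = min (l2norm (wh k - w k)) (l2norm (wh k + w k))) →
        (∀ k, min (l2norm (wh k - w k)) (l2norm (wh k + w k)) ≤ δmax) →
        δmax ≤ Real.sqrt D / (C * m * Real.sqrt (Real.log m)) →
        ∀ n : ℕ, n = 2 ∨ n = 3 →
          opNorm ((Matrix.of fun l k => (dot (wh l) (s k • w k)) ^ n) -
              Matrix.of fun l k => (dot (wh l) (wh k)) ^ n) ≤
            C * m * (Real.log m / D) ^ ((2 * (n : ℝ) - 1) / 4) * δmax :=
  mixed_gram_perturbation_general c₂ c₃
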